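/- arXiv:2207.06502 — 8 statements merged into one kernel-verified Lean document; each statement's English description precedes it below -/
import Mathlib

section
/- On a weakly (κ,μ)-space, the tensor h satisfies h² = (κ-1)φ², and consequently κ ≤ 1. -/
open RealInnerProductSpace

/-- On a weakly `(κ,μ)`-space, `h² = (κ-1)φ²`, and consequently
`κ ≤ 1`.  Hypotheses: the weak `(κ,μ)` condition for `l X = R(X,ξ)ξ`, the general
contact metric identity `φlφ - l = 2(h² + φ²)`, `φ² = -Id + η⊗ξ`, `hφ = -φh`,
`h` symmetric, `hξ = 0`, and existence of a nonzero vector in the contact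
distribution `ker η`. -/
theorem h_sq_eq_and_kappa_le_one
    {V : Type*} [NormedAddCommGroup V] [InnerProductSpace ℝ V]
    (η : V →ₗ[ℝ] ℝ) (ξ : V) (φ h l : V →ₗ[ℝ] V) (κ μ : ℝ)
    (hweak : ∀ X : V, l X = κ • (X - η X • ξ) + μ • h X)
    (hid : ∀ X : V, φ (l (φ X)) - l X = (2:ℝ) • (h (h X) + φ (φ X)))
    (hφ2 : ∀ X : V, φ (φ X) = -X + η X • ξ)
    (hφξ : φ ξ = 0) (hhξ : h ξ = 0)
    (hanti : ∀ X : V, h (φ X) = -φ (h X))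
    (hsym : ∀ X Y : V, ⟪h X, Y⟫ = ⟪X, h Y⟫)
    (hD : ∃ X : V, η X = 0 ∧ X ≠ 0) :
    (∀ X : V, h (h X) = (κ - 1) • φ (φ X)) ∧ κ ≤ 1 := by
  -- η (φ X) • ξ = 0
  have hηφ : ∀ X : V, η (φ X) • ξ = 0 := by
    intro X
    have h1 := hφ2 (φ X)
    have h2 := congrArg φ (hφ2 X)
    rw [map_add, map_neg, map_smul, hφξ, smul_zero, add_zero] at h2
    have h3 : -φ X + η (φ X) • ξ = -φ X + 0 := by
      rw [add_zero]; exact h1.symm.trans h2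
    exact add_left_cancel h3
  -- η (h X) • ξ = 0
  have hηh : ∀ X : V, η (h X) • ξ = 0 := by
    intro X
    have h3 := congrArg h (hφ2 X)
    rw [map_add, map_neg, map_smul, hhξ, smul_zero, add_zero] at h3
    -- h3 : h (φ (φ X)) = -h X
    have h4 : h (φ (φ X)) = -h X + η (h X) • ξ := by
      rw [hanti (φ X), hanti X, map_neg, neg_neg, hφ2 (h X)]
    have h5 : -h X + η (h X) • ξ = -h X + 0 := by
      rw [add_zero]; exact h4.symm.trans h3
    exact add_left_cancel h5
  have key : ∀ X : V, h (h X) = (κ - 1) • φ (φ X) := by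
    intro X
    have e := hid X
    rw [hweak (φ X), hweak X] at e
    rw [map_add, map_smul, map_smul, map_sub, map_smul, hφξ, smul_zero, sub_zero,
      hanti X, map_neg, hφ2 (h X), hφ2 X] at e
    -- e now an equation in X, h X, h h X, φ φ X, η X • ξ, η (h X) • ξ
    rw [hηh X] at e
    rw [hφ2 X]
    have e2 : (2:ℝ) • (h (h X) + (-X + η X • ξ)) =
        (2:ℝ) • ((κ - 1) • (-X + η X • ξ) + (-X + η X • ξ)) := by
      rw [← e]; module
    have e3 := smul_right_injective V (by norm_num : (2:ℝ) ≠ 0) e2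
    exact add_right_cancel e3
  refine ⟨key, ?_⟩
  obtain ⟨X, hX0, hXne⟩ := hD
  have hk := key X
  rw [hφ2 X, hX0, zero_smul, add_zero, smul_neg] at hk
  have hne : ⟪X, X⟫ ≠ 0 := fun h0 => hXne (inner_self_eq_zero.mp h0)
  have hpos : (0:ℝ) < ⟪X, X⟫ := lt_of_le_of_ne real_inner_self_nonneg (Ne.symm hne)
  have h1 : (0:ℝ) ≤ ⟪h X, h X⟫ := real_inner_self_nonneg
  have h2 : ⟪h X, h X⟫ = (1 - κ) * ⟪X, X⟫ := by
    rw [hsym X (h X), hk, inner_neg_right, real_inner_smul_right]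
    ring
  nlinarith [h2 ▸ h1]
end

section
/- On a weakly (κ,μ)-space, ∇_ξ h = -μ φh. -/
/-- On a weakly `(κ,μ)`-space, `∇_ξ h = -μ φh`.
`Dh` denotes the operator `∇_ξ h`; hypotheses are the general contact metric
identity `∇_ξ h = φ - h²φ - φl`, the weak `(κ,μ)` condition for `l X = R(X,ξ)ξ`,
`h² = (κ-1)φ²`, `φ² = -Id + η⊗ξ` and `φξ = 0`. -/
theorem nabla_xi_h
    {V : Type*} [AddCommGroup V] [Module ℝ V]
    (η : V →ₗ[ℝ] ℝ) (ξ : V) (φ h l Dh : V →ₗ[ℝ] V) (κ μ : ℝ)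
    (hbl1 : ∀ X : V, Dh X = φ X - h (h (φ X)) - φ (l X))
    (hweak : ∀ X : V, l X = κ • (X - η X • ξ) + μ • h X)
    (hh2 : ∀ X : V, h (h X) = (κ - 1) • φ (φ X))
    (hφ2 : ∀ X : V, φ (φ X) = -X + η X • ξ)
    (hφξ : φ ξ = 0) :
    ∀ X : V, Dh X = -μ • φ (h X) := by
  intro X
  have h3 : φ (φ (φ X)) = - φ X := by
    rw [hφ2 X, map_add, map_neg, map_smul, hφξ, smul_zero, add_zero]
  rw [hbl1 X, hweak X, hh2 (φ X), h3, map_add, map_smul, map_smul, map_sub,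
    map_smul, hφξ, smul_zero, sub_zero]
  module
end

section
/- A weakly semi-symmetric contact metric weakly (κ,0)-space with κ ≠ 0 satisfies the strong condition R(X,Y)ξ = κ(η(Y)X - η(X)Y) for all X, Y. -/
open RealInnerProductSpace

/-- A weakly semi-symmetric contact metric weakly `(κ,0)`-space
with `κ ≠ 0` satisfies the strong condition `R(X,Y)ξ = κ(η(Y)X - η(X)Y)`.
Hypotheses: the weakly semi-symmetric condition `(R(X,ξ)·R)(Y,ξ)ξ = 0` (with `R`
acting as a derivation), the weakly `(κ,0)` condition, the first Bianchi
identity, the standard curvature symmetries, and `η = g(·,ξ)`. -/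
theorem weakly_semisymmetric_kappa_zero_is_strong
    {V : Type*} [NormedAddCommGroup V] [InnerProductSpace ℝ V]
    (R : V →ₗ[ℝ] V →ₗ[ℝ] V →ₗ[ℝ] V)
    (η : V →ₗ[ℝ] ℝ) (ξ : V) (κ : ℝ) (hκ : κ ≠ 0)
    (hηg : ∀ X : V, η X = ⟪X, ξ⟫)
    (hRskew1 : ∀ X Y Z : V, R X Y Z = -R Y X Z)
    (hRskew2 : ∀ X Y Z W : V, ⟪R X Y Z, W⟫ = -⟪R X Y W, Z⟫)
    (bianchi : ∀ X Y Z : V, R X Y Z + R Y Z X + R Z X Y = 0)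
    (hweak : ∀ X : V, R X ξ ξ = κ • (X - η X • ξ))
    (semisym : ∀ X Y : V,
      R X ξ (R Y ξ ξ) - R (R X ξ Y) ξ ξ - R Y (R X ξ ξ) ξ - R Y ξ (R X ξ ξ) = 0) :
    ∀ X Y : V, R X Y ξ = κ • (η Y • X - η X • Y) := by
  intro X Y
  -- η of R X Y ξ vanishes
  have hηP : ∀ A B : V, η (R A B ξ) = 0 := by
    intro A B
    have h := hRskew2 A B ξ ξ
    rw [hηg]
    linarith
  -- Bianchi consequence
  have hA : R Y ξ X = R X ξ Y - R X Y ξ := by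
    have h := bianchi Y ξ X
    rw [hRskew1 ξ X Y] at h
    linear_combination (norm := module) h
  have hYX : R Y X ξ = - R X Y ξ := hRskew1 Y X ξ
  have E1 := semisym X Y
  have E2 := semisym Y X
  simp only [hweak, map_smul, map_sub, LinearMap.smul_apply, LinearMap.sub_apply,
    smul_sub] at E1 E2
  rw [hA] at E1 E2
  rw [hYX] at E1
  simp only [map_sub, hηP, sub_zero] at E1 E2
  have key : κ • (R X Y ξ) = κ • (κ • (η Y • X - η X • Y)) := by
    linear_combination (norm := module) (3:ℝ)⁻¹ • E1 - (3:ℝ)⁻¹ • E2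
  exact smul_right_injective V hκ key
end

section
/- A weakly semi-symmetric K-contact manifold is Sasakian, i.e. if R(X,ξ)ξ = X - η(X)ξ and (R(X,ξ)·R)(Y,ξ)ξ = 0 for all X, Y, then R(X,Y)ξ = η(Y)X - η(X)Y. -/
open RealInnerProductSpace

/-- A weakly semi-symmetric K-contact manifold is Sasakian:
if `R(X,ξ)ξ = X - η(X)ξ` and `(R(X,ξ)·R)(Y,ξ)ξ = 0` for all `X, Y`, then
`R(X,Y)ξ = η(Y)X - η(X)Y`. -/
theorem weakly_semisymmetric_K_contact_is_Sasakian
    {V : Type*} [NormedAddCommGroup V] [InnerProductSpace ℝ V]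
    (R : V →ₗ[ℝ] V →ₗ[ℝ] V →ₗ[ℝ] V)
    (η : V →ₗ[ℝ] ℝ) (ξ : V)
    (hηg : ∀ X : V, η X = ⟪X, ξ⟫)
    (hRskew1 : ∀ X Y Z : V, R X Y Z = -R Y X Z)
    (hRskew2 : ∀ X Y Z W : V, ⟪R X Y Z, W⟫ = -⟪R X Y W, Z⟫)
    (bianchi : ∀ X Y Z : V, R X Y Z + R Y Z X + R Z X Y = 0)
    (hK : ∀ X : V, R X ξ ξ = X - η X • ξ)
    (semisym : ∀ X Y : V,
      R X ξ (R Y ξ ξ) - R (R X ξ Y) ξ ξ - R Y (R X ξ ξ) ξ - R Y ξ (R X ξ ξ) = 0) :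
    ∀ X Y : V, R X Y ξ = η Y • X - η X • Y := by
  -- First compute η(R X ξ Y) = -⟪X,Y⟫ + η X * η Y
  have hetaR : ∀ X Y : V, η (R X ξ Y) = -⟪X, Y⟫ + η X * η Y := by
    intro X Y
    rw [hηg, hRskew2, hK]
    rw [inner_sub_left, real_inner_smul_left, real_inner_comm Y ξ, ← hηg Y]
    ring
  -- Key consequence of semi-symmetry:
  have eqA : ∀ X Y : V, R Y X ξ - R ξ Y X =
      (2 * η X) • Y - η Y • X - ⟪X, Y⟫ • ξ := by
    intro X Y
    have h := semisym X Y
    rw [hK X, hK Y, hK (R X ξ Y)] at h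
    simp only [map_sub, map_smul, LinearMap.sub_apply, LinearMap.smul_apply] at h
    rw [hK X, hK Y, hetaR X Y] at h
    have hs : R Y ξ X = -R ξ Y X := by rw [hRskew1]
    rw [hs] at h
    linear_combination (norm := module) -h
  intro X Y
  have hA := eqA X Y
  have hA' := eqA Y X
  rw [real_inner_comm X Y] at hA'
  have e1 : R Y X ξ = -R X Y ξ := by rw [hRskew1]
  have e2 : R Y ξ X = -R ξ Y X := by rw [hRskew1]
  have hb := bianchi ξ X Y
  rw [e1] at hA
  rw [e2] at hb
  -- now solve linearly
  have : (3:ℝ) • R X Y ξ = (3:ℝ) • (η Y • X - η X • Y) := by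
    linear_combination (norm := module) hA' - hA + hb
  have h3 : (3:ℝ) ≠ 0 := by norm_num
  exact smul_right_injective V h3 this
end

section
/- The Boeckx invariant I_M = (1 - μ/2)/√(1-κ) is invariant under D_a-homothetic deformations: with κ̄ = (κ + a² - 1)/a² and μ̄ = (μ + 2a - 2)/a, one has (1 - μ̄/2)/√(1-κ̄) = (1 - μ/2)/√(1-κ). -/
/-! Under the deformation `1 - κ` is scaled by `a⁻²` and `1 - μ/2` by `a⁻¹`; since `a > 0`,
the square root turns the first factor into `a⁻¹` as well, and it cancels in the quotient. -/

lemma one_sub_deformed_kappa {a : ℝ} (ha : a ≠ 0) (κ : ℝ) :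
    1 - (κ + a^2 - 1)/a^2 = (1 - κ)/a^2 := by
  field_simp
  ring

lemma one_sub_half_deformed_mu {a : ℝ} (ha : a ≠ 0) (μ : ℝ) :
    1 - ((μ + 2*a - 2)/a)/2 = (1 - μ/2)/a := by
  field_simp
  ring

lemma Real.sqrt_div_sq_of_nonneg (x : ℝ) {a : ℝ} (ha : 0 ≤ a) : √(x / a^2) = √x / a := by
  rw [Real.sqrt_div' x (sq_nonneg a), Real.sqrt_sq ha]

theorem boeckx_invariant_deformation_invariant_general
    (κ μ a : ℝ) (ha : 0 < a) :
    (1 - ((μ + 2*a - 2)/a)/2) / Real.sqrt (1 - (κ + a^2 - 1)/a^2) =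
      (1 - μ/2) / Real.sqrt (1 - κ) := by
  rw [one_sub_deformed_kappa ha.ne', one_sub_half_deformed_mu ha.ne',
    Real.sqrt_div_sq_of_nonneg _ ha.le, div_div_div_cancel_right₀ ha.ne']

/-- The Boeckx invariant `I_M = (1 - μ/2)/√(1-κ)` is invariant
under `D_a`-homothetic deformations: with `κ̄ = (κ + a² - 1)/a²` and
`μ̄ = (μ + 2a - 2)/a`, one has `(1 - μ̄/2)/√(1-κ̄) = (1 - μ/2)/√(1-κ)`. -/
theorem boeckx_invariant_deformation_invariant
    (κ μ a : ℝ) (hκ : κ < 1) (ha : 0 < a) :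
    (1 - ((μ + 2*a - 2)/a)/2) / Real.sqrt (1 - (κ + a^2 - 1)/a^2) =
      (1 - μ/2) / Real.sqrt (1 - κ) :=
  boeckx_invariant_deformation_invariant_general κ μ a ha
end

section
/- On a non-K-contact weakly (κ,μ)-space with |I_M| > 1, the tensor φ̄ = (ε/((1-κ)√((2-μ)²-4(1-κ))))(L_ξh ∘ h), where ε = sign(I_M), satisfies φ̄² = -Id + η⊗ξ. -/
/-- On a non-K-contact weakly `(κ,μ)`-space with `|I_M| > 1`,
the tensor `φ̄ = (ε/((1-κ)√((2-μ)²-4(1-κ)))) (L_ξh ∘ h)`, where `ε = sign I_M`,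
satisfies `φ̄² = -Id + η⊗ξ`.  `T` denotes the operator `L_ξh ∘ h` with
`T² = (1-κ)²((2-μ)²-4(1-κ))φ²` as hypothesis. -/
theorem phibar_is_almost_complex
    {V : Type*} [AddCommGroup V] [Module ℝ V]
    (η : V →ₗ[ℝ] ℝ) (ξ : V) (φ T : V →ₗ[ℝ] V) (κ μ : ℝ)
    (hκ : κ < 1)
    (hI : 1 < |(1 - μ/2) / Real.sqrt (1 - κ)|)
    (hT2 : ∀ X : V, T (T X) =
      ((1 - κ)^2 * ((2 - μ)^2 - 4*(1 - κ))) • φ (φ X))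
    (hφ2 : ∀ X : V, φ (φ X) = -X + η X • ξ)
    (ε : ℝ)
    (hε : ε = if 0 < (1 - μ/2) / Real.sqrt (1 - κ) then 1 else -1)
    (φb : V →ₗ[ℝ] V)
    (hφb : φb = (ε / ((1 - κ) * Real.sqrt ((2 - μ)^2 - 4*(1 - κ)))) • T) :
    ∀ X : V, φb (φb X) = -X + η X • ξ := by
  intro X
  have h1κ : (0:ℝ) < 1 - κ := by linarith
  have hs : 0 < Real.sqrt (1 - κ) := Real.sqrt_pos.mpr h1κ
  -- D > 0
  have habs : Real.sqrt (1 - κ) < |1 - μ/2| := by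
    have := hI
    rw [abs_div, abs_of_pos hs, lt_div_iff₀ hs] at this
    linarith
  have hD : 0 < (2 - μ)^2 - 4*(1 - κ) := by
    have h2 : 1 - κ < (1 - μ/2)^2 := by
      have := Real.sq_sqrt h1κ.le
      nlinarith [sq_abs (1 - μ/2), habs, hs]
    nlinarith
  have hsD : Real.sqrt ((2 - μ)^2 - 4*(1 - κ)) ^ 2 = (2 - μ)^2 - 4*(1 - κ) :=
    Real.sq_sqrt hD.le
  have hsDpos : 0 < Real.sqrt ((2 - μ)^2 - 4*(1 - κ)) := Real.sqrt_pos.mpr hD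
  have hε2 : ε ^ 2 = 1 := by
    rcases ite_eq_or_eq (0 < (1 - μ/2) / Real.sqrt (1 - κ)) (1:ℝ) (-1) with h | h <;>
      rw [hε, h] <;> ring
  set c : ℝ := ε / ((1 - κ) * Real.sqrt ((2 - μ)^2 - 4*(1 - κ))) with hc
  have hcoef : c^2 * ((1 - κ)^2 * ((2 - μ)^2 - 4*(1 - κ))) = 1 := by
    rw [hc, div_pow, hε2, mul_pow]
    rw [div_mul_eq_mul_div, one_mul, div_eq_one_iff_eq (by positivity)]
    rw [hsD]
  have : φb (φb X) = c ^ 2 • T (T X) := by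
    simp [hφb, pow_two, mul_smul]
  rw [this, hT2, smul_smul, hcoef, one_smul, hφ2]
end

section
/- The tensor L_ξh ∘ h on a weakly (κ,μ)-space is invariant under the flow of ξ: L_ξ(L_ξh ∘ h) = 0. -/
/-- The tensor `L_ξh ∘ h` on a weakly `(κ,μ)`-space is invariant
under the flow of `ξ`: `L_ξ(L_ξh ∘ h) = 0`.  The Lie derivative along `ξ` is
modelled as a linear derivation `Lξ` on endomorphisms, with
`L_ξφ = 2h`, `L_ξh = (2-μ)φh + 2(1-κ)φ`, `h² = (κ-1)φ²`, `hφ = -φh`,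
`φ² = -Id + η⊗ξ` and `(η⊗ξ)∘h = 0` as hypotheses. -/
theorem Lh_comp_h_flow_invariant
    {V : Type*} [AddCommGroup V] [Module ℝ V]
    (η : V →ₗ[ℝ] ℝ) (ξ : V) (φ h : Module.End ℝ V) (κ μ : ℝ)
    (Lξ : Module.End ℝ V →ₗ[ℝ] Module.End ℝ V)
    (hderiv : ∀ A B : Module.End ℝ V, Lξ (A * B) = Lξ A * B + A * Lξ B)
    (hLφ : Lξ φ = (2:ℝ) • h)
    (hLh : Lξ h = (2 - μ) • (φ * h) + (2*(1 - κ)) • φ)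
    (hh2 : h * h = (κ - 1) • (φ * φ))
    (hanti : h * φ = -(φ * h))
    (hφ2 : φ * φ = -(1 : Module.End ℝ V) + η.smulRight ξ)
    (hEh : η.smulRight ξ * h = 0) :
    Lξ (Lξ h * h) = 0 := by
  have e1 : φ * φ * h = -h := by
    rw [hφ2, add_mul, hEh, neg_one_mul, add_zero]
  have m1 : φ * (φ * h) = -h := by rw [← mul_assoc, e1]
  have e3 : h * h * h = (1 - κ) • h := by
    rw [hh2, smul_mul_assoc, e1, smul_neg, ← neg_smul]; ring_nf
  have p1 : φ * h * (φ * h) = (κ - 1) • (φ * φ) := by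
    rw [mul_assoc, ← mul_assoc h, hanti, neg_mul, mul_neg, ← mul_assoc, m1,
      neg_mul, neg_neg, hh2]
  have p2 : φ * h * φ = h := by
    rw [mul_assoc, hanti, mul_neg, m1, neg_neg]
  have n1 : φ * (φ * h) * h = (1 - κ) • (φ * φ) := by
    rw [m1, neg_mul, hh2, ← neg_smul]; ring_nf
  rw [hderiv, hLh]
  simp only [map_add, map_smul, hderiv, hLφ, hLh]
  simp only [add_mul, mul_add, smul_add, smul_mul_assoc, mul_smul_comm, smul_smul]
  rw [e3, n1, e1, hh2, p1, m1, p2]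
  module
end

section
/- On a non-K-contact weakly (κ,μ)-space, the tensor h̃ = (1/(2√(1-κ)))L_ξh satisfies h̃² = ((1-κ) - (1-μ/2)²)φ². -/
/-- On a non-K-contact weakly `(κ,μ)`-space, the tensor
`h̃ = (1/(2√(1-κ))) L_ξh` satisfies `h̃² = ((1-κ) - (1-μ/2)²)φ²`.
`Lh` denotes the operator `L_ξ h`, with `L_ξh = (2-μ)φh + 2(1-κ)φ`,
`h² = (κ-1)φ²`, `hφ = -φh`, `φ² = -Id + η⊗ξ`, `φξ = 0`, `hξ = 0` as hypotheses. -/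
theorem htilde_squared
    {V : Type*} [AddCommGroup V] [Module ℝ V]
    (η : V →ₗ[ℝ] ℝ) (ξ : V) (φ h Lh : V →ₗ[ℝ] V) (κ μ : ℝ)
    (hκ : κ < 1)
    (hLh : ∀ X : V, Lh X = (2 - μ) • φ (h X) + (2*(1 - κ)) • φ X)
    (hh2 : ∀ X : V, h (h X) = (κ - 1) • φ (φ X))
    (hanti : ∀ X : V, h (φ X) = -φ (h X))
    (hφ2 : ∀ X : V, φ (φ X) = -X + η X • ξ)
    (hφξ : φ ξ = 0) (hhξ : h ξ = 0)
    (ht : V →ₗ[ℝ] V)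
    (hht : ht = (1/(2*Real.sqrt (1 - κ))) • Lh) :
    ∀ X : V, ht (ht X) = ((1 - κ) - (1 - μ/2)^2) • φ (φ X) := by

  intro X
  have h1κ : (0:ℝ) < 1 - κ := by linarith
  have hs : Real.sqrt (1 - κ) ^ 2 = 1 - κ := Real.sq_sqrt h1κ.le
  have hs0 : Real.sqrt (1 - κ) ≠ 0 := by positivity
  have key : Lh (Lh X) = ((κ - 1)*(2 - μ)^2 + 4*(1 - κ)^2) • φ (φ X) := by
    simp only [hLh, map_add, map_smul, hanti, map_neg, hh2, smul_neg, neg_neg,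
      smul_smul, hφ2, map_sub, hφξ, hhξ, smul_zero, smul_add, add_zero, neg_add_rev]
    module
  rw [hht]
  simp only [LinearMap.smul_apply, map_smul, key, smul_smul]
  congr 1
  field_simp
  nlinarith [hs, h1κ]
end
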